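/- Let a, b be real numbers with 0 ≤ a, b < 1, and let v₁, v₂, g be positive integers such that g ≥ 6, gcd(v₁, g) = 1, g does not divide v₂, and v₂ is not congruent to v₁ or to −v₁ modulo g. Then there exists an integer h such that min(‖(h/g)·v₁ + a‖, ‖(h/g)·v₂ + b‖) ≥ 1/4. -/

import Mathlib

/-!
Let `c` invert `v₁` modulo `g` and let `w` be the residue of `c v₂` of least absolute value,
so `2|w| ≤ g`, and `2 ≤ |w|` because `v₂ ≡ v₁ w` is not `0` or `±v₁` modulo `g`. Since `h = t c` gives
`h v₁ / g ≡ t / g` and `h v₂ / g ≡ t w / g` modulo `1`, it suffices to find an integer `t`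
with both `t / g + a` and `t w / g + b` at distance at least `1/4` from `ℤ`. The `t` for which
`t / g + a ∈ [1/4, 3/4]` form a run of roughly `g / 2` consecutive integers. Along it,
`t w / g + b` moves in steps of length `|w| / g ≤ 1/2`, too short to jump between the
`1/4`-neighbourhoods of two different integers, and over a total distance at least
`(g - 3) |w| / (2g) ≥ 1/2`, too long to stay near a single one.
-/

/-- `dnn x` is the distance from `x` to the nearest integer:
`dnn x = min_{m : ℤ} |x - m|`. -/
noncomputable def dnn (x : ℝ) : ℝ := ⨅ m : ℤ, |x - m|

lemma dnn_eq_abs_sub_round (x : ℝ) : dnn x = |x - round x| := by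
  refine le_antisymm (ciInf_le ⟨0, ?_⟩ (round x)) (le_ciInf (round_le x))
  rintro _ ⟨m, rfl⟩
  exact abs_nonneg _

lemma dnn_add_intCast (x : ℝ) (k : ℤ) : dnn (x + k) = dnn x := by
  rw [dnn_eq_abs_sub_round, dnn_eq_abs_sub_round, round_add_intCast, Int.cast_add,
    add_sub_add_right_eq_sub]

lemma le_dnn_of_mem_Icc {r x : ℝ} (hx : x ∈ Set.Icc r (1 - r)) : r ≤ dnn x := by
  refine le_ciInf fun m ↦ ?_
  rcases le_or_gt m 0 with hm | hm
  · have : (m : ℝ) ≤ 0 := by exact_mod_cast hm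
    exact le_abs.mpr (Or.inl (by linarith [hx.1]))
  · have : (1 : ℝ) ≤ m := by exact_mod_cast hm
    exact le_abs.mpr (Or.inr (by linarith [hx.2]))

lemma dnn_intCast_div_mul_add_of_modEq {g h v y : ℤ} (hmod : h * v ≡ y [ZMOD g]) (a : ℝ) :
    dnn (h / g * v + a) = dnn (y / g + a) := by
  obtain ⟨k, hk⟩ := Int.modEq_iff_dvd.mp hmod.symm
  rcases eq_or_ne g 0 with rfl | hg
  · simp
  · have hgR : (g : ℝ) ≠ 0 := by exact_mod_cast hg
    have hhv : (h : ℝ) * v = y + g * k := by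
      rw [← Int.cast_mul, ← Int.cast_mul, ← hk]; push_cast; ring
    rw [← dnn_add_intCast (y / g + a) k]
    congr 1
    field_simp
    linear_combination hhv

lemma round_eq_round_of_abs_sub_le {x y : ℝ} (hx : |x - round x| < 1 / 4)
    (hy : |y - round y| < 1 / 4) (hxy : |y - x| ≤ 1 / 2) : round y = round x := by
  have h : |((round y - round x : ℤ) : ℝ)| < 1 := by
    push_cast
    rw [abs_lt] at hx hy ⊢
    rw [abs_le] at hxy
    constructor <;> linarith
  exact sub_eq_zero.mp (Int.abs_lt_one_iff.mp (by exact_mod_cast h))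

lemma exists_quarter_le_dnn_of_abs_sub_le (f : ℤ → ℝ) {t₀ t₁ : ℤ} (h₀₁ : t₀ ≤ t₁)
    (hstep : ∀ t, t₀ ≤ t → t < t₁ → |f (t + 1) - f t| ≤ 1 / 2)
    (hspan : 1 / 2 ≤ |f t₁ - f t₀|) :
    ∃ t, t₀ ≤ t ∧ t ≤ t₁ ∧ 1 / 4 ≤ dnn (f t) := by
  by_contra! hnear
  simp only [dnn_eq_abs_sub_round] at hnear
  have hround : ∀ t, t₀ ≤ t → t ≤ t₁ → round (f t) = round (f t₀) := by
    intro t ht₀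
    induction t, ht₀ using Int.leInduction with
    | base => exact fun _ ↦ rfl
    | succ t ht₀ ih =>
      intro ht₁
      rw [← ih (by omega)]
      exact round_eq_round_of_abs_sub_le (hnear t ht₀ (by omega)) (hnear _ (by omega) ht₁)
        (hstep t ht₀ (by omega))
  have h₁ := hnear t₁ h₀₁ le_rfl
  have h₀ := hnear t₀ le_rfl h₀₁
  rw [hround t₁ h₀₁ le_rfl] at h₁
  rw [abs_lt] at h₀ h₁
  rw [le_abs] at hspan
  rcases hspan with hspan | hspan <;> linarith

lemma exists_run_quarter_le_dnn_intCast_div_add (a : ℝ) {g : ℤ} (hg : 0 < g) :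
    ∃ t₀ t₁ : ℤ, g ≤ 2 * (t₁ - t₀) + 3 ∧
      ∀ t, t₀ ≤ t → t ≤ t₁ → 1 / 4 ≤ dnn (t / g + a) := by
  have hgR : (0 : ℝ) < g := by exact_mod_cast hg
  refine ⟨⌈g * (1 / 4 - a)⌉, ⌊g * (3 / 4 - a)⌋, ?_, fun t ht₀ ht₁ ↦ ?_⟩
  · have hlt : (g : ℝ) < 2 * (⌊g * (3 / 4 - a)⌋ - ⌈g * (1 / 4 - a)⌉ : ℤ) + 4 := by
      push_cast
      linarith [Int.lt_floor_add_one ((g : ℝ) * (3 / 4 - a)),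
        Int.ceil_lt_add_one ((g : ℝ) * (1 / 4 - a))]
    have : g < 2 * (⌊g * (3 / 4 - a)⌋ - ⌈g * (1 / 4 - a)⌉) + 4 := by exact_mod_cast hlt
    omega
  · have h₀ : (g : ℝ) * (1 / 4 - a) ≤ t := Int.ceil_le.mp ht₀
    have h₁ : (t : ℝ) ≤ g * (3 / 4 - a) := Int.le_floor.mp ht₁
    apply le_dnn_of_mem_Icc
    constructor
    · rw [← sub_le_iff_le_add, le_div_iff₀ hgR]; linarith
    · rw [← le_sub_iff_add_le, div_le_iff₀ hgR]; linarith

lemma exists_quarter_le_dnn_intCast_div_add (a b : ℝ) {g w : ℤ} (hg : 6 ≤ g) (hw : 2 ≤ |w|)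
    (hwg : 2 * |w| ≤ g) : ∃ t : ℤ, 1 / 4 ≤ dnn (t / g + a) ∧ 1 / 4 ≤ dnn (t * w / g + b) := by
  obtain ⟨t₀, t₁, hrun, hfirst⟩ := exists_run_quarter_le_dnn_intCast_div_add a (by omega : 0 < g)
  have hgR : (0 : ℝ) < g := by exact_mod_cast (by omega : 0 < g)
  have hstep : ∀ t : ℤ, |((t + 1 : ℤ) : ℝ) * w / g + b - (t * w / g + b)| ≤ 1 / 2 := by
    intro t
    have hdiff : ((t + 1 : ℤ) : ℝ) * w / g + b - (t * w / g + b) = w / g := by push_cast; ring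
    rw [hdiff, abs_div, abs_of_pos hgR, div_le_iff₀ hgR, ← Int.cast_abs]
    have : 2 * ((|w| : ℤ) : ℝ) ≤ g := by exact_mod_cast hwg
    linarith
  have hspan : 1 / 2 ≤ |(t₁ : ℝ) * w / g + b - (t₀ * w / g + b)| := by
    have hdiff : (t₁ : ℝ) * w / g + b - (t₀ * w / g + b) = ((t₁ - t₀) * w : ℤ) / g := by
      push_cast; ring
    have : g ≤ 2 * |(t₁ - t₀) * w| := by
      rw [abs_mul, abs_of_nonneg (by omega : 0 ≤ t₁ - t₀)]
      nlinarith
    rw [hdiff, abs_div, abs_of_pos hgR, le_div_iff₀ hgR, ← Int.cast_abs]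
    have : (g : ℝ) ≤ 2 * ((|(t₁ - t₀) * w| : ℤ) : ℝ) := by exact_mod_cast this
    linarith
  obtain ⟨t, ht₀, ht₁, hsecond⟩ := exists_quarter_le_dnn_of_abs_sub_le
    (fun t : ℤ ↦ t * w / g + b) (by omega) (fun t _ _ ↦ hstep t) hspan
  exact ⟨t, hfirst t ht₀ ht₁, hsecond⟩

lemma two_mul_abs_bmod_le (x : ℤ) {m : ℕ} (hm : 0 < m) : 2 * |Int.bmod x m| ≤ m := by
  have := Int.le_bmod (x := x) hm
  have := Int.bmod_lt (x := x) hm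
  rcases abs_cases (Int.bmod x m) with ⟨habs, _⟩ | ⟨habs, _⟩ <;> omega

lemma two_le_abs_of_modEq_inv_mul {g u v c w : ℤ} (hc : u * c ≡ 1 [ZMOD g])
    (hw : c * v ≡ w [ZMOD g]) (h₀ : ¬ g ∣ v) (h₁ : ¬ v ≡ u [ZMOD g])
    (h₂ : ¬ v ≡ -u [ZMOD g]) : 2 ≤ |w| := by
  have hv : v ≡ u * w [ZMOD g] :=
    calc v = 1 * v := (one_mul v).symm
      _ ≡ u * c * v [ZMOD g] := hc.symm.mul_right v
      _ ≡ u * w [ZMOD g] := by rw [mul_assoc]; exact hw.mul_left u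
  by_contra! hsmall
  rw [abs_lt] at hsmall
  obtain hw | hw | hw : w = -1 ∨ w = 0 ∨ w = 1 := by omega
  · exact h₂ (by simpa [hw] using hv)
  · exact h₀ (Int.modEq_zero_iff_dvd.mp (by simpa [hw] using hv))
  · exact h₁ (by simpa [hw] using hv)

theorem stmt_8_general (a b : ℝ)
    (v₁ v₂ g : ℕ) (hg : 6 ≤ g)
    (hcop : Nat.gcd v₁ g = 1) (hndvd : ¬ (g : ℤ) ∣ (v₂ : ℤ))
    (hne₁ : ¬ (v₂ : ℤ) ≡ (v₁ : ℤ) [ZMOD (g : ℤ)])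
    (hne₂ : ¬ (v₂ : ℤ) ≡ -(v₁ : ℤ) [ZMOD (g : ℤ)]) :
    ∃ h : ℤ, 1 / 4 ≤
      min (dnn ((h : ℝ) / (g : ℝ) * (v₁ : ℝ) + a)) (dnn ((h : ℝ) / (g : ℝ) * (v₂ : ℝ) + b)) := by
  obtain ⟨c, hc⟩ := Int.mod_coprime hcop
  set w := Int.bmod (c * v₂) g
  have hw : c * v₂ ≡ w [ZMOD g] := Int.bmod_emod.symm
  obtain ⟨t, h₁, h₂⟩ := exists_quarter_le_dnn_intCast_div_add a b (by exact_mod_cast hg)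
    (two_le_abs_of_modEq_inv_mul hc hw hndvd hne₁ hne₂) (two_mul_abs_bmod_le _ (by omega))
  refine ⟨t * c, le_min ?_ ?_⟩
  · have hmod : t * c * v₁ ≡ t [ZMOD g] := by
      simpa [mul_assoc, mul_comm c] using hc.mul_left t
    have := dnn_intCast_div_mul_add_of_modEq hmod a
    push_cast at this ⊢
    rwa [this]
  · have hmod : t * c * v₂ ≡ t * w [ZMOD g] := by
      rw [mul_assoc]; exact hw.mul_left t
    have := dnn_intCast_div_mul_add_of_modEq hmod b
    push_cast at this ⊢
    rwa [this]

theorem stmt_8 (a b : ℝ) (ha₀ : 0 ≤ a) (ha₁ : a < 1) (hb₀ : 0 ≤ b) (hb₁ : b < 1)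
    (v₁ v₂ g : ℕ) (hv₁ : 0 < v₁) (hv₂ : 0 < v₂) (hg : 6 ≤ g)
    (hcop : Nat.gcd v₁ g = 1) (hndvd : ¬ (g : ℤ) ∣ (v₂ : ℤ))
    (hne₁ : ¬ (v₂ : ℤ) ≡ (v₁ : ℤ) [ZMOD (g : ℤ)])
    (hne₂ : ¬ (v₂ : ℤ) ≡ -(v₁ : ℤ) [ZMOD (g : ℤ)]) :
    ∃ h : ℤ, 1 / 4 ≤
      min (dnn ((h : ℝ) / (g : ℝ) * (v₁ : ℝ) + a)) (dnn ((h : ℝ) / (g : ℝ) * (v₂ : ℝ) + b)) :=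
  stmt_8_general a b v₁ v₂ g hg hcop hndvd hne₁ hne₂
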